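/- arXiv:math/0612443 — 7 statements merged into one kernel-verified Lean document; each statement's English description precedes it below -/
import Mathlib

section
/- Let f be a square matrix with integer entries, p a prime, and k ≥ 1. Then Tr(f^(p^k)) ≡ Tr(f^(p^(k−1))) (mod p^k). -/
/-!
`Tr (A ^ N)` is the sum, over closed walks `h : ZMod N → n`, of the weight
`∏ t, A (h t) (h (t + 1))`, and rotating a walk does not change its weight. For `N = p ^ (m + 1)`
a walk either has period `p ^ m`, in which case it is the `p`-fold repetition of a walk `g` of
length `p ^ m` and its weight is `(weight g) ^ p`, or its rotations form a free orbit of size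
`p ^ (m + 1)`. Hence `∑ φ (weight h) ≡ ∑ φ ((weight g) ^ p) [mod p ^ (m + 1) * D]` whenever `D`
divides every value of `φ`. Taking `φ y = y ^ p ^ (e + 1) - y ^ p ^ e`, which is divisible by
`p ^ (e + 1)` by Fermat, an induction on `m` shows that `∑ (w ^ p ^ (e + 1) - w ^ p ^ e)` over
walks of length `p ^ m` is divisible by `p ^ (m + e + 1)`; the case `e = 0`, together with
`φ = id`, is the theorem.
-/

open Finset AddAction

attribute [local instance] arrowAddAction

theorem AddAction.card_mul_dvd_sum_of_free {G X R : Type*} [AddGroup G] [Fintype G]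
    [AddAction G X] [CommSemiring R] {s : Finset X} (hs : ∀ (g : G), ∀ x ∈ s, g +ᵥ x ∈ s)
    (hfree : ∀ (g : G), ∀ x ∈ s, g +ᵥ x = x → g = 0) {f : X → R}
    (hf : ∀ (g : G) x, f (g +ᵥ x) = f x) {D : R} (hD : ∀ x ∈ s, D ∣ f x) :
    (Fintype.card G : R) * D ∣ ∑ x ∈ s, f x := by
  classical
  rw [← sum_fiberwise_of_maps_to fun x hx => mem_image_of_mem (orbit G) hx]
  refine dvd_sum fun O hO => ?_
  obtain ⟨c, hc, rfl⟩ := mem_image.1 hO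
  have hinj : Set.InjOn (· +ᵥ c : G → X) (univ : Finset G) :=
    fun g _ g' _ (hgg' : g +ᵥ c = g' +ᵥ c) =>
      (neg_add_eq_zero.1 <| hfree _ c hc <| by rw [add_vadd, hgg', neg_vadd_vadd]).symm
  have horbit : {x ∈ s | orbit G x = orbit G c} = univ.image (· +ᵥ c : G → X) := by
    ext x
    simp only [mem_filter, mem_image, mem_univ, true_and, orbit_eq_iff, mem_orbit_iff]
    constructor
    · rintro ⟨_, g, rfl⟩
      exact ⟨g, rfl⟩
    · rintro ⟨g, rfl⟩
      exact ⟨hs g c hc, g, rfl⟩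
  rw [horbit, sum_image hinj]
  simp only [hf, sum_const, card_univ, nsmul_eq_mul]
  exact mul_dvd_mul_left _ (hD c hc)

theorem Int.pow_dvd_pow_prime_pow_sub {p : ℕ} (hp : p.Prime) (e : ℕ) (y : ℤ) :
    (p : ℤ) ^ (e + 1) ∣ y ^ p ^ (e + 1) - y ^ p ^ e := by
  rw [pow_succ' p e, pow_mul]
  exact dvd_sub_pow_of_dvd_sub (Int.ModEq.pow_prime_eq_self hp y).symm.dvd e

namespace ZMod

theorem natCast_pow_mem_of_ne_bot {p : ℕ} [hp : Fact p.Prime] {m : ℕ}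
    {H : AddSubgroup (ZMod (p ^ (m + 1)))} (hH : H ≠ ⊥) :
    ((p ^ m : ℕ) : ZMod (p ^ (m + 1))) ∈ H := by
  obtain ⟨⟨a, ha⟩, ha0⟩ := AddSubgroup.ne_bot_iff_exists_ne_zero.1 hH
  have hv : a.val ≠ 0 := (val_ne_zero a).2 fun h => ha0 (by simp [h])
  obtain ⟨j, w, hpw, hvw⟩ := Nat.exists_eq_pow_mul_and_not_dvd hv p hp.out.one_lt.ne'
  have hj : j ≤ m := by
    have hw0 : w ≠ 0 := by
      rintro rfl
      exact hv hvw
    have : p ^ j < p ^ (m + 1) :=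
      (Nat.le_mul_of_pos_right _ hw0.bot_lt).trans_lt (hvw ▸ val_lt a)
    exact Nat.lt_succ_iff.1 ((Nat.pow_lt_pow_iff_right hp.out.one_lt).1 this)
  have hw : IsUnit (w : ZMod (p ^ (m + 1))) :=
    (isUnit_iff_coprime _ _).2 ((hp.out.coprime_iff_not_dvd.2 hpw).symm.pow_right _)
  have hpow : (p : ZMod (p ^ (m + 1))) ^ (m - j) * p ^ j = p ^ m := by
    rw [← pow_add, Nat.sub_add_cancel hj]
  have hinv : (↑hw.unit⁻¹ : ZMod (p ^ (m + 1))) * w = 1 := by simp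
  -- Additive subgroups of `ZMod N` are ideals, since `c * a = c.val • a`.
  have hmul : ((p ^ m : ℕ) : ZMod (p ^ (m + 1)))
      = ((p : ZMod (p ^ (m + 1))) ^ (m - j) * ↑hw.unit⁻¹).val • a := by
    rw [nsmul_eq_mul, natCast_zmod_val, ← natCast_zmod_val a, hvw]
    push_cast
    linear_combination (-((p : ZMod (p ^ (m + 1))) ^ (m - j) * p ^ j)) * hinv - hpow
  exact hmul ▸ H.nsmul_mem ha _

theorem prod_comp_castHom {M : Type*} [CommMonoid M] {d N : ℕ} [NeZero d] [NeZero N]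
    (hd : d ∣ N) (F : ZMod d → M) :
    ∏ t : ZMod N, F (castHom hd (ZMod d) t) = (∏ a, F a) ^ (N / d) := by
  classical
  set π := castHom hd (ZMod d)
  have hfiber (a : ZMod d) : #{t | π t = a} = #{t | π t = 0} :=
    AddMonoidHom.card_fiber_eq_of_mem_range π (castHom_surjective hd a) ⟨0, map_zero π⟩
  have hN : N / d = #{t | π t = 0} := Nat.div_eq_of_eq_mul_right (NeZero.pos d) <| by
    simpa [hfiber] using card_eq_sum_card_fiberwise (f := π) (s := univ) (t := univ) (by simp)
  rw [prod_comp, image_univ_of_surjective (castHom_surjective hd), ← prod_pow]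
  exact prod_congr rfl fun a _ => by rw [hfiber a, hN]

theorem exists_comp_castHom_eq_of_natCast_mem_stabilizer {X : Type*} {d N : ℕ} [NeZero N]
    (hd : d ∣ N) {h : ZMod N → X} (hh : (d : ZMod N) ∈ stabilizer (ZMod N) h) :
    ∃ g : ZMod d → X, g ∘ castHom hd (ZMod d) = h := by
  have hper (c : ZMod N) (hc : c ∈ stabilizer (ZMod N) h) (x : ZMod N) : h (c + x) = h x := by
    have : h (-c + (c + x)) = h (c + x) := congrFun (mem_stabilizer_iff.1 hc) (c + x)
    rw [neg_add_cancel_left] at this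
    exact this.symm
  refine ⟨fun a => h (a.val : ZMod N), funext fun t => ?_⟩
  have hval : (castHom hd (ZMod d) t).val = t.val % d := by
    conv_lhs => rw [← natCast_zmod_val t]
    rw [map_natCast, val_natCast]
  have ht : t = (t.val / d) • (d : ZMod N) + ((t.val % d : ℕ) : ZMod N) := by
    rw [nsmul_eq_mul, ← Nat.cast_mul, ← Nat.cast_add, Nat.div_add_mod', natCast_zmod_val]
  conv_rhs => rw [ht, hper _ (nsmul_mem hh _)]
  rw [Function.comp_apply, hval]

end ZMod

namespace Matrix

variable {n R : Type*} [CommSemiring R]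

def closedWalkWeight (A : Matrix n n R) {N : ℕ} [NeZero N] (h : ZMod N → n) : R :=
  ∏ t, A (h t) (h (t + 1))

theorem closedWalkWeight_vadd (A : Matrix n n R) {N : ℕ} [NeZero N] (a : ZMod N)
    (h : ZMod N → n) : A.closedWalkWeight (a +ᵥ h) = A.closedWalkWeight h := by
  refine Fintype.prod_equiv (Equiv.addLeft (-a)) _ (fun t => A (h t) (h (t + 1))) fun t => ?_
  change A (h (-a + t)) (h (-a + (t + 1))) = A (h (-a + t)) (h (-a + t + 1))
  rw [add_assoc]

theorem closedWalkWeight_comp_castHom (A : Matrix n n R) {d N : ℕ} [NeZero d] [NeZero N]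
    (hd : d ∣ N) (g : ZMod d → n) :
    A.closedWalkWeight (g ∘ ZMod.castHom hd (ZMod d)) = A.closedWalkWeight g ^ (N / d) := by
  simp only [closedWalkWeight, Function.comp_apply, map_add, map_one]
  exact ZMod.prod_comp_castHom hd fun a => A (g a) (g (a + 1))

variable [Fintype n]

theorem pow_succ_apply_eq_sum [DecidableEq n] (A : Matrix n n R) (m : ℕ) (i j : n) :
    (A ^ (m + 1)) i j = ∑ v : Fin m → n, ∏ t : Fin (m + 1),
      A (Fin.cons (α := fun _ => n) i v t) (Fin.snoc (α := fun _ => n) v j t) := by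
  induction m generalizing i with
  | zero => simp [Fin.snoc]
  | succ m ih =>
    rw [pow_succ', mul_apply, ← (Fin.consEquiv fun _ => n).sum_comp, Fintype.sum_prod_type]
    refine sum_congr rfl fun l _ => ?_
    simp only [ih, mul_sum, Fin.consEquiv, Equiv.coe_fn_mk, ← Fin.cons_snoc_eq_snoc_cons,
      Fin.prod_univ_succ, Fin.cons_zero, Fin.cons_succ]

theorem trace_pow_eq_sum_closedWalkWeight [DecidableEq n] (A : Matrix n n R) (N : ℕ)
    [NeZero N] : (A ^ N).trace = ∑ h : ZMod N → n, A.closedWalkWeight h := by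
  obtain ⟨m, rfl⟩ := Nat.exists_eq_succ_of_ne_zero (NeZero.ne N)
  change ∑ i, (A ^ (m + 1)) i i = ∑ h : Fin (m + 1) → n, ∏ t, A (h t) (h (t + 1))
  rw [← (Fin.consEquiv fun _ => n).sum_comp, Fintype.sum_prod_type]
  refine sum_congr rfl fun i _ => ?_
  simp only [pow_succ_apply_eq_sum, Fin.snoc_eq_cons_rotate, finRotate_apply]
  rfl

theorem pow_mul_dvd_sum_closedWalkWeight_sub {S : Type*} [CommRing S] (A : Matrix n n R)
    (p : ℕ) [Fact p.Prime] (m : ℕ) (φ : R → S) {D : S} (hD : ∀ y, D ∣ φ y) :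
    (p : S) ^ (m + 1) * D ∣ ∑ h : ZMod (p ^ (m + 1)) → n, φ (A.closedWalkWeight h)
      - ∑ g : ZMod (p ^ m) → n, φ (A.closedWalkWeight g ^ p) := by
  classical
  set π := ZMod.castHom (pow_dvd_pow p (Nat.le_add_right m 1)) (ZMod (p ^ m))
  set M : ZMod (p ^ (m + 1)) := ((p ^ m : ℕ) : ZMod (p ^ (m + 1)))
  have hperiodic : univ.filter (fun h : ZMod (p ^ (m + 1)) → n => M ∈ stabilizer _ h)
      = univ.image (· ∘ π : (ZMod (p ^ m) → n) → _) := by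
    ext h
    simp only [mem_filter, mem_univ, true_and, mem_image]
    refine ⟨fun hh => ZMod.exists_comp_castHom_eq_of_natCast_mem_stabilizer _ hh, ?_⟩
    rintro ⟨g, rfl⟩
    refine mem_stabilizer_iff.2 (funext fun t => ?_)
    change g (π (-M + t)) = g (π t)
    rw [map_add, map_neg, map_natCast, ZMod.natCast_self, neg_zero, zero_add]
  have hperiodic_sum :
      ∑ h ∈ univ.filter (fun h : ZMod (p ^ (m + 1)) → n => M ∈ stabilizer _ h),
        φ (A.closedWalkWeight h) = ∑ g : ZMod (p ^ m) → n, φ (A.closedWalkWeight g ^ p) := by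
    rw [hperiodic, sum_image fun g _ g' _ hgg' =>
      (ZMod.castHom_surjective _).injective_comp_right hgg']
    simp only [closedWalkWeight_comp_castHom,
      Nat.pow_div (Nat.le_add_right m 1) (Nat.Prime.pos Fact.out), Nat.add_sub_cancel_left,
      pow_one]
  rw [← sum_filter_add_sum_filter_not univ (fun h => M ∈ stabilizer _ h), hperiodic_sum,
    add_sub_cancel_left]
  -- Rotations act freely on the remaining walks, since every nonzero subgroup contains `M`.
  have hfree := card_mul_dvd_sum_of_free (G := ZMod (p ^ (m + 1)))
    (s := {h | M ∉ stabilizer _ h}) (f := fun h => φ (A.closedWalkWeight h)) (D := D)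
    (fun a h hh => by
      simp only [mem_filter, mem_univ, true_and, mem_stabilizer_iff] at hh ⊢
      rwa [vadd_comm, vadd_left_cancel_iff])
    (fun a h hh ha => by
      by_contra ha0
      refine (mem_filter.1 hh).2 (ZMod.natCast_pow_mem_of_ne_bot ?_)
      exact AddSubgroup.ne_bot_iff_exists_ne_zero.2 ⟨⟨a, ha⟩, mt (congrArg Subtype.val) ha0⟩)
    (fun a h => congrArg φ (A.closedWalkWeight_vadd a h)) (fun h _ => hD _)
  rwa [ZMod.card, Nat.cast_pow] at hfree

theorem pow_dvd_sum_closedWalkWeight_pow_sub (A : Matrix n n ℤ) (p : ℕ) [hp : Fact p.Prime]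
    (m e : ℕ) : (p : ℤ) ^ (m + e + 1) ∣ ∑ g : ZMod (p ^ m) → n,
      (A.closedWalkWeight g ^ p ^ (e + 1) - A.closedWalkWeight g ^ p ^ e) := by
  induction m generalizing e with
  | zero => exact dvd_sum fun g _ => by simpa using Int.pow_dvd_pow_prime_pow_sub hp.out e _
  | succ m ih =>
    have hstep := A.pow_mul_dvd_sum_closedWalkWeight_sub p m
      (fun y => y ^ p ^ (e + 1) - y ^ p ^ e) (Int.pow_dvd_pow_prime_pow_sub hp.out e)
    simp only [← pow_mul, ← pow_succ'] at hstep
    rw [← pow_add, show m + 1 + (e + 1) = m + 1 + e + 1 by ring] at hstep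
    have hprev := ih (e + 1)
    rw [show m + (e + 1) + 1 = m + 1 + e + 1 by ring] at hprev
    simpa only [sub_add_cancel] using dvd_add hstep hprev

end Matrix

theorem stmt_1 (r : ℕ) (f : Matrix (Fin r) (Fin r) ℤ)
    (p : ℕ) (hp : p.Prime) (k : ℕ) (hk : 1 ≤ k) :
    (f ^ (p ^ k)).trace ≡ (f ^ (p ^ (k - 1))).trace [ZMOD (p : ℤ) ^ k] := by
  have := Fact.mk hp
  obtain ⟨m, rfl⟩ : ∃ m, k = m + 1 := ⟨k - 1, by omega⟩
  rw [Nat.add_sub_cancel]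
  refine (Int.modEq_iff_dvd.2 ?_).symm
  rw [f.trace_pow_eq_sum_closedWalkWeight, f.trace_pow_eq_sum_closedWalkWeight]
  have hstep := f.pow_mul_dvd_sum_closedWalkWeight_sub p m id (one_dvd ·)
  have hgauss := f.pow_dvd_sum_closedWalkWeight_pow_sub p m 0
  rw [mul_one] at hstep
  simp only [add_zero, zero_add, pow_one, pow_zero, sum_sub_distrib] at hgauss
  simpa [sub_add_sub_cancel] using dvd_add hstep hgauss
end

section
/- Let f be a square matrix with complex entries whose characteristic polynomial has integer coefficients, p a prime, and k ≥ 1. Then there exists an integer c such that Tr(f^(p^k)) − Tr(f^(p^(k−1))) = p^k · c. -/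
/-!
Over an algebraically closed field the trace of `M ^ m` is the `m`-th power sum of the roots of
the characteristic polynomial. On symmetric integer polynomials `expand p` is a Frobenius lift
(`expand p g ≡ g ^ p` mod `p`), so, as in Dwork's lemma, the power sums
`psum (p ^ j) = (expand p)^[j] (psum 1)` are the ghost components `∑ p ^ i * w i ^ p ^ (j - i)`
of some symmetric polynomials `w i`. At the roots the `w i` take integer values `z i`, because
symmetric functions of the roots are polynomials in the coefficients. Hence
`Tr (f ^ p ^ j) = W_j(z)` for the Witt polynomials `W_j`, and `W_k(z) ≡ W_(k-1)(z)` mod `p ^ k`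
for integers `z i`, the identity of `ℤ` being a Frobenius lift by Fermat's little theorem.
-/

open Finset

namespace Matrix

open Polynomial

variable {n K : Type*} [Fintype n] [DecidableEq n] [Field K] [IsAlgClosed K]

theorem card_roots_charpoly (M : Matrix n n K) :
    Multiset.card M.charpoly.roots = Fintype.card n := by
  rw [IsAlgClosed.card_roots_eq_natDegree, charpoly_natDegree_eq_dim]

theorem det_sub_scalar_eq_prod_roots_charpoly (M : Matrix n n K) (μ : K) :
    (M - scalar n μ).det = (M.charpoly.roots.map (· - μ)).prod := by
  have heval := (IsAlgClosed.splits M.charpoly).eval_eq_prod_roots μ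
  rw [M.charpoly_monic.leadingCoeff, one_mul, eval_charpoly] at heval
  rw [← neg_sub, det_neg, heval, ← M.card_roots_charpoly, ← Multiset.card_map (μ - ·),
    ← Multiset.prod_map_neg, Multiset.map_map]
  congr 2
  ext; simp

theorem det_aeval_eq_prod_roots_charpoly (M : Matrix n n K) (q : K[X]) :
    (aeval M q).det = (M.charpoly.roots.map q.eval).prod := by
  let detAeval : K[X] →* K := detMonoidHom.comp (aeval M).toMonoidHom
  have hsplit := IsAlgClosed.splits q
  calc (aeval M q).det
      = detAeval (C q.leadingCoeff * (q.roots.map (X - C ·)).prod) := by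
        rw [← hsplit.eq_prod_roots]; rfl
    _ = q.leadingCoeff ^ Fintype.card n *
          (q.roots.map fun μ => (M.charpoly.roots.map (· - μ)).prod).prod := by
        rw [map_mul, map_multiset_prod, Multiset.map_map]
        congr 1
        · simp [detAeval, algebraMap_eq_diagonal, Pi.algebraMap_apply]
        · congr 1
          refine Multiset.map_congr rfl fun μ _ => ?_
          simp [detAeval, ← det_sub_scalar_eq_prod_roots_charpoly, algebraMap_eq_diagonal,
            scalar_apply, Pi.algebraMap_def]
    _ = (M.charpoly.roots.map q.eval).prod := by
        simp_rw [hsplit.eval_eq_prod_roots, Multiset.prod_map_mul, Multiset.map_const',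
          Multiset.prod_replicate, card_roots_charpoly]
        rw [Multiset.prod_map_prod_map]

theorem trace_pow_eq_sum_roots_charpoly (M : Matrix n n K) (m : ℕ) :
    (M ^ m).trace = (M.charpoly.roots.map (· ^ m)).sum := by
  have hcharpoly : (M ^ m).charpoly = ((M.charpoly.roots.map (· ^ m)).map (X - C ·)).prod := by
    refine Polynomial.funext fun x => ?_
    rw [eval_charpoly, eval_multiset_prod, Multiset.map_map, Multiset.map_map]
    have : scalar n x - M ^ m = aeval M (C x - X ^ m) := by
      simp [algebraMap_eq_diagonal, scalar_apply, Pi.algebraMap_def]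
    rw [this, det_aeval_eq_prod_roots_charpoly]
    simp
  rw [trace_eq_sum_roots_charpoly, hcharpoly, roots_multiset_prod_X_sub_C]

end Matrix

open MvPolynomial

theorem Polynomial.esymm_roots_mem_bot {R K : Type*} [CommRing R] [Field K] [Algebra R K]
    {q : Polynomial K} (hsplit : q.Splits) (hmonic : q.Monic)
    (hcoeff : ∀ i, q.coeff i ∈ (⊥ : Subalgebra R K)) (m : ℕ) :
    q.roots.esymm m ∈ (⊥ : Subalgebra R K) := by
  rcases le_or_gt m q.natDegree with hm | hm
  · have hvieta := Polynomial.coeff_eq_esymm_roots_of_splits hsplit (Nat.sub_le q.natDegree m)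
    rw [hmonic.leadingCoeff, one_mul, Nat.sub_sub_self hm] at hvieta
    have hesymm : q.roots.esymm m = (-1) ^ m * q.coeff (q.natDegree - m) := by
      rw [hvieta, ← mul_assoc, ← pow_add, Even.neg_one_pow ⟨m, rfl⟩, one_mul]
    rw [hesymm]
    exact mul_mem (pow_mem (neg_mem (one_mem _)) _) (hcoeff _)
  · rw [← Polynomial.splits_iff_card_roots.1 hsplit] at hm
    rw [Multiset.esymm, Multiset.powersetCard_eq_empty _ hm, Multiset.map_zero, Multiset.sum_zero]
    exact Subalgebra.zero_mem _

theorem MvPolynomial.IsSymmetric.aeval_mem_bot {σ R A : Type*} [Fintype σ] [CommRing R]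
    [CommRing A] [Algebra R A] {v : σ → A}
    (hv : ∀ m, (univ.val.map v).esymm m ∈ (⊥ : Subalgebra R A)) {P : MvPolynomial σ R}
    (hP : P.IsSymmetric) : aeval v P ∈ (⊥ : Subalgebra R A) := by
  obtain ⟨q, hq⟩ := esymmAlgHom_surjective R (le_refl (Fintype.card σ)) ⟨P, hP⟩
  have hPq : P = aeval (fun i : Fin (Fintype.card σ) => esymm σ R (i + 1)) q := by
    rw [← esymmAlgHom_apply, hq]
  rw [hPq, comp_aeval_apply]
  have hrange := AlgHom.mem_range_self
    (aeval fun i : Fin (Fintype.card σ) => aeval v (esymm σ R (i + 1))) q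
  rw [aeval_range] at hrange
  refine Algebra.adjoin_le ?_ hrange
  rintro _ ⟨i, rfl⟩
  simp only [aeval_esymm_eq_multiset_esymm, SetLike.mem_coe]
  exact hv _

namespace MvPolynomial

variable {σ : Type*}

theorem natCast_dvd_expand_sub_pow {p : ℕ} [Fact p.Prime] (g : MvPolynomial σ ℤ) :
    (p : MvPolynomial σ ℤ) ∣ expand p g - g ^ p := by
  rw [show (p : MvPolynomial σ ℤ) = C (p : ℤ) by simp, C_dvd_iff_zmod, map_sub, map_expand,
    map_pow, expand_zmod, sub_self]

theorem IsSymmetric.expand {R : Type*} [CommSemiring R] {g : MvPolynomial σ R}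
    (hg : g.IsSymmetric) (p : ℕ) : (expand p g).IsSymmetric := fun e => by
  rw [rename_expand, hg e]

theorem IsSymmetric.of_natCast_mul {R : Type*} [CommRing R] [IsDomain R] [CharZero R]
    {p : ℕ} (hp : p ≠ 0) {g : MvPolynomial σ R} (h : ((p : MvPolynomial σ R) * g).IsSymmetric) :
    g.IsSymmetric := fun e => by
  have he := h e
  rw [map_mul, map_natCast] at he
  exact mul_left_cancel₀ (by exact_mod_cast hp) he

variable (σ) in
noncomputable def expandSymmetric (R : Type*) [CommSemiring R] (p : ℕ) :
    symmetricSubalgebra σ R →+* symmetricSubalgebra σ R :=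
  (expand p : MvPolynomial σ R →ₐ[R] _).toRingHom.restrict _ _ fun _ hg => hg.expand p

@[simp]
theorem coe_expandSymmetric {R : Type*} [CommSemiring R] (p : ℕ) (g : symmetricSubalgebra σ R) :
    (expandSymmetric σ R p g : MvPolynomial σ R) = expand p (g : MvPolynomial σ R) :=
  rfl

theorem natCast_dvd_expandSymmetric_sub_pow {p : ℕ} [Fact p.Prime]
    (g : symmetricSubalgebra σ ℤ) :
    (p : symmetricSubalgebra σ ℤ) ∣ expandSymmetric σ ℤ p g - g ^ p := by
  obtain ⟨h, hh⟩ := natCast_dvd_expand_sub_pow (p := p) (g : MvPolynomial σ ℤ)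
  have hsymm : h.IsSymmetric := by
    refine IsSymmetric.of_natCast_mul (Fact.out : p.Prime).ne_zero ?_
    have hcoe : ((expandSymmetric σ ℤ p g - g ^ p : symmetricSubalgebra σ ℤ) :
        MvPolynomial σ ℤ) = expand p (g : MvPolynomial σ ℤ) - (g : MvPolynomial σ ℤ) ^ p := by
      simp
    rw [← hh, ← hcoe]
    exact (expandSymmetric σ ℤ p g - g ^ p).2
  refine ⟨⟨h, hsymm⟩, Subtype.ext ?_⟩
  simpa using hh

theorem expand_psum [Fintype σ] {R : Type*} [CommSemiring R] (p m : ℕ) :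
    expand p (psum σ R m) = psum σ R (m * p) := by
  simp [psum, pow_mul']

end MvPolynomial

section FrobeniusLift

variable {S : Type*} [CommRing S] {p : ℕ} (φ : S →+* S)

theorem pow_succ_dvd_iterate_succ_sub {a : S} {k : ℕ} {w : ℕ → S}
    (hφ : ∀ x, (p : S) ∣ φ x - x ^ p)
    (hw : φ^[k] a = ∑ i ∈ range (k + 1), (p : S) ^ i * w i ^ p ^ (k - i)) :
    (p : S) ^ (k + 1) ∣
      φ^[k + 1] a - ∑ i ∈ range (k + 1), (p : S) ^ i * w i ^ p ^ (k + 1 - i) := by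
  rw [Function.iterate_succ_apply', hw]
  simp only [map_sum, map_mul, map_pow, map_natCast, ← sum_sub_distrib, ← mul_sub]
  refine dvd_sum fun i hi => ?_
  have hik : i + (k - i + 1) = k + 1 := by have := mem_range.1 hi; omega
  rw [show k + 1 - i = k - i + 1 by omega, ← hik, pow_add, pow_succ' p, pow_mul]
  exact mul_dvd_mul_left _ (dvd_sub_pow_of_dvd_sub (hφ _) _)

theorem exists_iterate_eq_aeval_wittPolynomial (hφ : ∀ x, (p : S) ∣ φ x - x ^ p) (a : S)
    (k : ℕ) : ∃ w : ℕ → S, ∀ j ≤ k, φ^[j] a = aeval w (wittPolynomial p ℤ j) := by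
  simp only [aeval_wittPolynomial]
  induction k with
  | zero => exact ⟨fun _ => a, fun j hj => by simp [Nat.le_zero.1 hj]⟩
  | succ k ih =>
    obtain ⟨w, hw⟩ := ih
    obtain ⟨c, hc⟩ := pow_succ_dvd_iterate_succ_sub φ hφ (hw k le_rfl)
    refine ⟨Function.update w (k + 1) c, fun j hj => ?_⟩
    have hsum (j : ℕ) (hj : j ≤ k) (e : ℕ → ℕ) :
        ∑ i ∈ range (j + 1), (p : S) ^ i * Function.update w (k + 1) c i ^ e i =
          ∑ i ∈ range (j + 1), (p : S) ^ i * w i ^ e i :=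
      sum_congr rfl fun i hi => by
        rw [Function.update_of_ne (by have := mem_range.1 hi; omega)]
    rcases Nat.lt_or_ge j (k + 1) with hjk | hjk
    · rw [hsum j (by omega), hw j (by omega)]
    · obtain rfl : j = k + 1 := by omega
      rw [sum_range_succ, hsum k le_rfl, Function.update_self, Nat.sub_self, pow_zero, pow_one]
      linear_combination hc

end FrobeniusLift

theorem Int.pow_succ_dvd_aeval_wittPolynomial_succ_sub {p : ℕ} [Fact p.Prime] (z : ℕ → ℤ)
    (k : ℕ) :
    (p : ℤ) ^ (k + 1) ∣ aeval z (wittPolynomial p ℤ (k + 1)) - aeval z (wittPolynomial p ℤ k) := by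
  have hfermat (x : ℤ) : (p : ℤ) ∣ RingHom.id ℤ x - x ^ p :=
    (Int.ModEq.pow_prime_eq_self Fact.out x).dvd
  have h := pow_succ_dvd_iterate_succ_sub (RingHom.id ℤ) hfermat
    (a := aeval z (wittPolynomial p ℤ k)) (k := k) (w := z)
    (by rw [RingHom.coe_id, Function.iterate_id, id, aeval_wittPolynomial])
  rw [RingHom.coe_id, Function.iterate_id, id] at h
  have hsplit : aeval z (wittPolynomial p ℤ (k + 1)) - aeval z (wittPolynomial p ℤ k) =
      (p : ℤ) ^ (k + 1) * z (k + 1) -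
        (aeval z (wittPolynomial p ℤ k) -
          ∑ i ∈ Finset.range (k + 1), (p : ℤ) ^ i * z i ^ p ^ (k + 1 - i)) := by
    rw [aeval_wittPolynomial, sum_range_succ, Nat.sub_self, pow_zero, pow_one]
    ring
  rw [hsplit]
  exact dvd_sub (dvd_mul_right _ _) h

theorem exists_aeval_psum_prime_pow_eq_aeval_wittPolynomial {σ A : Type*} [Fintype σ]
    [CommRing A] {p : ℕ} [Fact p.Prime] {v : σ → A}
    (hv : ∀ m, (univ.val.map v).esymm m ∈ (⊥ : Subalgebra ℤ A)) (k : ℕ) :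
    ∃ z : ℕ → ℤ, ∀ j ≤ k,
      aeval v (psum σ ℤ (p ^ j)) = algebraMap ℤ A (aeval z (wittPolynomial p ℤ j)) := by
  let a : symmetricSubalgebra σ ℤ := ⟨psum σ ℤ 1, psum_isSymmetric σ ℤ 1⟩
  have hiterate (j : ℕ) :
      ((expandSymmetric σ ℤ p)^[j] a : MvPolynomial σ ℤ) = psum σ ℤ (p ^ j) := by
    induction j with
    | zero => rfl
    | succ j ih => rw [Function.iterate_succ_apply', coe_expandSymmetric, ih, expand_psum, pow_succ]
  obtain ⟨w, hw⟩ := exists_iterate_eq_aeval_wittPolynomial (expandSymmetric σ ℤ p)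
    natCast_dvd_expandSymmetric_sub_pow a k
  choose z hz using fun i => Algebra.mem_bot.1 ((w i).2.aeval_mem_bot hv)
  refine ⟨z, fun j hj => ?_⟩
  rw [← hiterate, hw j hj, aeval_wittPolynomial, aeval_wittPolynomial]
  push_cast
  simp only [map_sum, map_mul, map_pow, map_natCast, hz]

theorem Matrix.exists_trace_pow_prime_pow_eq_aeval_wittPolynomial {n K : Type*} [Fintype n]
    [DecidableEq n] [Field K] [IsAlgClosed K] (M : Matrix n n K)
    (hM : ∀ i, M.charpoly.coeff i ∈ (⊥ : Subalgebra ℤ K)) {p : ℕ} [Fact p.Prime] (k : ℕ) :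
    ∃ z : ℕ → ℤ, ∀ j ≤ k, (M ^ p ^ j).trace = (aeval z (wittPolynomial p ℤ j) : K) := by
  classical
  obtain ⟨σ, _, v, hv⟩ : ∃ (σ : Type _) (_ : Fintype σ) (v : σ → K),
      univ.val.map v = M.charpoly.roots :=
    ⟨_, _, _, Multiset.map_univ_coe _⟩
  have hesymm (m : ℕ) : (univ.val.map v).esymm m ∈ (⊥ : Subalgebra ℤ K) :=
    hv ▸ Polynomial.esymm_roots_mem_bot (IsAlgClosed.splits _) M.charpoly_monic hM m
  obtain ⟨z, hz⟩ := exists_aeval_psum_prime_pow_eq_aeval_wittPolynomial (p := p) hesymm k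
  refine ⟨z, fun j hj => ?_⟩
  rw [trace_pow_eq_sum_roots_charpoly, ← hv, Multiset.map_map, ← eq_intCast (algebraMap ℤ K),
    ← hz j hj, psum, map_sum, Finset.sum_eq_multiset_sum]
  simp

theorem stmt_3 (r : ℕ) (f : Matrix (Fin r) (Fin r) ℂ)
    (hint : ∀ i : ℕ, ∃ z : ℤ, f.charpoly.coeff i = (z : ℂ))
    (p : ℕ) (hp : p.Prime) (k : ℕ) (hk : 1 ≤ k) :
    ∃ c : ℤ, (f ^ (p ^ k)).trace - (f ^ (p ^ (k - 1))).trace = (p : ℂ) ^ k * (c : ℂ) := by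
  have := Fact.mk hp
  obtain ⟨k, rfl⟩ : ∃ m, k = m + 1 := ⟨k - 1, by omega⟩
  have hcoeff (i : ℕ) : f.charpoly.coeff i ∈ (⊥ : Subalgebra ℤ ℂ) := by
    obtain ⟨z, hz⟩ := hint i
    exact ⟨z, by simp [hz]⟩
  obtain ⟨z, hz⟩ := f.exists_trace_pow_prime_pow_eq_aeval_wittPolynomial hcoeff (p := p) (k + 1)
  obtain ⟨c, hc⟩ := Int.pow_succ_dvd_aeval_wittPolynomial_succ_sub (p := p) z k
  refine ⟨c, ?_⟩
  rw [Nat.add_sub_cancel, hz _ le_rfl, hz _ k.le_succ]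
  exact_mod_cast hc
end

section
/- Let G be a finite group and let ρ be a finite-dimensional complex representation of G whose character χ takes only integer values. Then for every g ∈ G, every prime p, and every k ≥ 1, there exists an integer c such that χ(g^(p^k)) − χ(g^(p^(k−1))) = p^k · c. -/
/-!
Since `g` has finite order `n`, `ρ g` is semisimple with `n`-th roots of unity as eigenvalues,
so `χ (g ^ j) = ∑ ω, d ω * ω ^ j` where `d ω` is the dimension of the `ω`-eigenspace. Fourier
inversion writes `n * d ω` as an integer polynomial evaluated at `ω⁻¹`; as this value is an
integer, it does not change when `ω` is replaced by another root of the same cyclotomic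
polynomial, so `d` is constant on the primitive `r`-th roots of unity. It remains to see that
`∑ ω ^ p ^ k - ω ^ p ^ (k - 1)` over the primitive `r`-th roots is a multiple of `p ^ k`. By Möbius
inversion this follows from the same statement for the sum over all `r`-th roots, which is
`r * ([r ∣ p ^ k] - [r ∣ p ^ (k - 1)])`, hence `p ^ k` or `0`.
-/

open Polynomial Finset Module

namespace Module.End

lemma pow_apply_of_mem_eigenspace {R M : Type*} [CommRing R] [AddCommGroup M] [Module R M]
    {f : End R M} {μ : R} {v : M} (hv : v ∈ f.eigenspace μ) (j : ℕ) :
    (f ^ j) v = μ ^ j • v := by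
  induction j with
  | zero => simp
  | succ j ih =>
    rw [pow_succ', mul_apply, ih, map_smul, mem_eigenspace_iff.mp hv, smul_smul, pow_succ]

variable {K V : Type*} [Field K] [AddCommGroup V] [Module K V] {f : End K V}

lemma mapsTo_eigenspace_pow (f : End K V) (μ : K) (j : ℕ) :
    Set.MapsTo (f ^ j) (f.eigenspace μ) (f.eigenspace μ) := fun v hv ↦ by
  rw [SetLike.mem_coe, pow_apply_of_mem_eigenspace hv]
  exact Submodule.smul_mem _ _ hv

lemma trace_restrict_eigenspace_pow [FiniteDimensional K V] (f : End K V) (μ : K) (j : ℕ) :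
    LinearMap.trace K _ ((f ^ j).restrict (f.mapsTo_eigenspace_pow μ j)) =
      finrank K (f.eigenspace μ) * μ ^ j := by
  have : (f ^ j).restrict (f.mapsTo_eigenspace_pow μ j) = μ ^ j • LinearMap.id := by
    ext x
    exact pow_apply_of_mem_eigenspace x.2 j
  rw [this, map_smul, LinearMap.trace_id, smul_eq_mul, mul_comm]

lemma IsSemisimple.trace_pow_eq_sum [FiniteDimensional K V] [IsAlgClosed K]
    (hf : f.IsSemisimple) {s : Finset K} (hs : ∀ μ, f.HasEigenvalue μ → μ ∈ s) (j : ℕ) :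
    LinearMap.trace K V (f ^ j) = ∑ μ ∈ s, finrank K (f.eigenspace μ) * μ ^ j := by
  classical
  have hint := DirectSum.isInternal_submodule_of_iSupIndep_of_iSup_eq_top
    f.eigenspaces_iSupIndep hf.iSup_eigenspace_eq_top
  have hfin : {μ | f.eigenspace μ ≠ ⊥}.Finite := s.finite_toSet.subset fun μ ↦ hs μ
  rw [LinearMap.trace_eq_sum_trace_restrict' hint hfin (f.mapsTo_eigenspace_pow · j),
    sum_congr rfl fun μ _ ↦ f.trace_restrict_eigenspace_pow μ j]
  refine sum_subset (fun μ hμ ↦ hs μ (hfin.mem_toFinset.mp hμ)) fun μ _ hμ ↦ ?_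
  rw [Submodule.finrank_eq_zero.mpr (by simpa using hμ), Nat.cast_zero, zero_mul]

lemma isSemisimple_of_pow_eq_one [CharZero K] {n : ℕ} (hn : n ≠ 0) (h : f ^ n = 1) :
    f.IsSemisimple :=
  isSemisimple_of_squarefree_aeval_eq_zero
    (X_pow_sub_one_separable_iff.mpr (Nat.cast_ne_zero.mpr hn)).squarefree (by simp [h])

lemma HasEigenvalue.pow_eq_one {μ : K} (hμ : f.HasEigenvalue μ) {n : ℕ} (h : f ^ n = 1) :
    μ ^ n = 1 := by
  obtain ⟨v, hv, hv0⟩ := hμ.exists_hasEigenvector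
  have := pow_apply_of_mem_eigenspace hv n
  rw [h, one_apply] at this
  exact smul_left_injective K hv0 (this.symm.trans (one_smul K v).symm)

lemma trace_pow_eq_sum_nthRootsFinset [FiniteDimensional K V] [CharZero K] [IsAlgClosed K]
    {n : ℕ} (hn : 0 < n) (h : f ^ n = 1) (j : ℕ) :
    LinearMap.trace K V (f ^ j) =
      ∑ μ ∈ nthRootsFinset n (1 : K), finrank K (f.eigenspace μ) * μ ^ j :=
  (isSemisimple_of_pow_eq_one hn.ne' h).trace_pow_eq_sum
    (fun _ hμ ↦ (mem_nthRootsFinset hn 1).mpr (hμ.pow_eq_one h)) j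

end Module.End

lemma geom_sum_eq_ite_of_pow_eq_one {K : Type*} [Field K] [DecidableEq K] {η : K} {n : ℕ}
    (h : η ^ n = 1) : ∑ j ∈ range n, η ^ j = if η = 1 then (n : K) else 0 := by
  split_ifs with h1
  · simp [h1]
  · rw [geom_sum_eq h1, h, sub_self, zero_div]

lemma IsPrimitiveRoot.sum_nthRootsFinset_pow {K : Type*} [Field K] {ζ : K} {r : ℕ}
    (hζ : IsPrimitiveRoot ζ r) (j : ℕ) :
    ∑ ω ∈ nthRootsFinset r (1 : K), ω ^ j = if r ∣ j then (r : K) else 0 := by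
  classical
  rcases r.eq_zero_or_pos with rfl | hr
  · simp
  have : NeZero r := ⟨hr.ne'⟩
  have hroot (a : ℕ) : (ζ ^ a) ^ r = 1 := by rw [pow_right_comm, hζ.pow_eq_one, one_pow]
  have hpar : ∑ ω ∈ nthRootsFinset r (1 : K), ω ^ j = ∑ a ∈ range r, (ζ ^ a) ^ j := by
    refine (sum_nbij (ζ ^ ·) (fun a _ ↦ ?_) (fun a ha b hb ↦ hζ.pow_inj (mem_range.mp ha)
      (mem_range.mp hb)) (fun ω hω ↦ ?_) fun _ _ ↦ rfl).symm
    · exact (Polynomial.mem_nthRootsFinset hr 1).mpr (hroot a)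
    · obtain ⟨a, ha, rfl⟩ :=
        hζ.eq_pow_of_pow_eq_one ((Polynomial.mem_nthRootsFinset hr 1).mp hω)
      exact ⟨a, mem_range.mpr ha, rfl⟩
  simp_rw [hpar, pow_right_comm _ _ j, geom_sum_eq_ite_of_pow_eq_one (hroot j),
    hζ.pow_eq_one_iff_dvd]

lemma sum_range_sum_nthRootsFinset_mul_inv_pow {K : Type*} [Field K] {n : ℕ} (c : K → K)
    {ω : K} (hω : ω ∈ nthRootsFinset n (1 : K)) :
    ∑ j ∈ range n, (∑ η ∈ nthRootsFinset n (1 : K), c η * η ^ j) * ω⁻¹ ^ j = n * c ω := by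
  classical
  have hn : 0 < n := Nat.pos_of_ne_zero (by rintro rfl; simp at hω)
  have hroot {η : K} (hη : η ∈ nthRootsFinset n (1 : K)) : η ^ n = 1 :=
    (mem_nthRootsFinset hn 1).mp hη
  calc _ = ∑ η ∈ nthRootsFinset n (1 : K), c η * ∑ j ∈ range n, (η * ω⁻¹) ^ j := by
        simp_rw [sum_mul, mul_sum, mul_pow, mul_assoc]
        exact sum_comm
    _ = ∑ η ∈ nthRootsFinset n (1 : K), c η * if η = ω then (n : K) else 0 := by
        refine sum_congr rfl fun η hη ↦ ?_
        rw [geom_sum_eq_ite_of_pow_eq_one (by rw [mul_pow, inv_pow, hroot hη, hroot hω, inv_one,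
          one_mul]), mul_inv_eq_one₀ (ne_zero_of_mem_nthRootsFinset one_ne_zero hω)]
    _ = n * c ω := by simp [hω, mul_comm]

lemma IsPrimitiveRoot.aeval_eq_of_aeval_eq_intCast {K : Type*} [Field K] [CharZero K]
    {η η' : K} {r : ℕ} (hr : 0 < r) (hη : IsPrimitiveRoot η r) (hη' : IsPrimitiveRoot η' r)
    {Q : ℤ[X]} {c : ℤ} (h : aeval η Q = c) : aeval η' Q = c := by
  have hdvd : minpoly ℤ η' ∣ Q - C c := by
    rw [← cyclotomic_eq_minpoly hη' hr, cyclotomic_eq_minpoly hη hr]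
    exact minpoly.isIntegrallyClosed_dvd (hη.isIntegral hr) (by simp [h])
  simpa [sub_eq_zero] using (minpoly.isIntegrallyClosed_dvd_iff (hη'.isIntegral hr) _).mpr hdvd

lemma eq_of_isPrimitiveRoot_of_sum_pow_eq_intCast {K : Type*} [Field K] [CharZero K] {n : ℕ}
    (hn : 0 < n) {d : K → ℤ}
    (hd : ∀ j, ∃ z : ℤ, ∑ η ∈ nthRootsFinset n (1 : K), (d η : K) * η ^ j = z)
    {r : ℕ} (hr : r ∣ n) {ω ω' : K} (hω : IsPrimitiveRoot ω r) (hω' : IsPrimitiveRoot ω' r) :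
    d ω = d ω' := by
  choose s hs using hd
  let Q : ℤ[X] := ∑ j ∈ range n, C (s j) * X ^ j
  have hQ {η : K} (hη : IsPrimitiveRoot η r) : aeval η⁻¹ Q = ((n * d η : ℤ) : K) := by
    have hmem : η ∈ nthRootsFinset n (1 : K) :=
      (mem_nthRootsFinset hn 1).mpr ((hη.pow_eq_one_iff_dvd n).mpr hr)
    push_cast
    rw [← sum_range_sum_nthRootsFinset_mul_inv_pow (fun η ↦ (d η : K)) hmem]
    simp [Q, hs]
  have := hω.inv.aeval_eq_of_aeval_eq_intCast (Nat.pos_of_dvd_of_pos hr hn) hω'.inv (hQ hω)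
  rw [hQ hω', Int.cast_inj] at this
  exact (mul_right_injective₀ (by exact_mod_cast hn.ne')).eq_iff.mp this.symm

lemma AddSubgroup.mem_of_forall_sum_divisors_mem {R : Type*} [AddCommGroup R]
    {H : AddSubgroup R} {f : ℕ → R} (hf : ∀ r > 0, ∑ d ∈ r.divisors, f d ∈ H) {r : ℕ}
    (hr : 0 < r) : f r ∈ H := by
  rw [← (ArithmeticFunction.sum_eq_iff_sum_smul_moebius_eq (f := f)).mp (fun _ _ ↦ rfl) r hr]
  refine H.sum_mem fun x hx ↦ H.zsmul_mem (hf _ ?_) _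
  exact Nat.pos_of_ne_zero (Nat.right_ne_zero_of_mem_divisorsAntidiagonal hx)

lemma sum_nthRootsFinset_pow_prime_pow_sub_mem {p : ℕ} (hp : p.Prime) (k : ℕ) {r : ℕ}
    (hr : 0 < r) :
    ∑ ω ∈ nthRootsFinset r (1 : ℂ), (ω ^ p ^ k - ω ^ p ^ (k - 1)) ∈
      AddSubgroup.zmultiples ((p : ℂ) ^ k) := by
  have hζ := Complex.isPrimitiveRoot_exp r hr.ne'
  rw [sum_sub_distrib, hζ.sum_nthRootsFinset_pow, hζ.sum_nthRootsFinset_pow]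
  split_ifs with hk hk' hk'
  · simp
  · obtain ⟨e, he, rfl⟩ := (Nat.dvd_prime_pow hp).mp hk
    obtain rfl : e = k := by
      by_contra hne
      exact hk' (pow_dvd_pow p (by omega))
    simp [AddSubgroup.mem_zmultiples]
  · exact absurd (hk'.trans (pow_dvd_pow p (k.sub_le 1))) hk
  · simp

lemma sum_primitiveRoots_pow_prime_pow_sub_mem {p : ℕ} (hp : p.Prime) (k r : ℕ) :
    ∑ ω ∈ primitiveRoots r ℂ, (ω ^ p ^ k - ω ^ p ^ (k - 1)) ∈
      AddSubgroup.zmultiples ((p : ℂ) ^ k) := by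
  rcases r.eq_zero_or_pos with rfl | hr
  · simp
  refine AddSubgroup.mem_of_forall_sum_divisors_mem
    (f := fun r ↦ ∑ ω ∈ primitiveRoots r ℂ, (ω ^ p ^ k - ω ^ p ^ (k - 1))) (fun r hr ↦ ?_) hr
  rw [← sum_biUnion fun _ _ _ _ ↦ IsPrimitiveRoot.disjoint (R := ℂ),
    ← IsPrimitiveRoot.nthRoots_one_eq_biUnion_primitiveRoots]
  exact sum_nthRootsFinset_pow_prime_pow_sub_mem hp k hr

theorem sum_mul_pow_prime_pow_sub_mem {n : ℕ} (hn : 0 < n) {d : ℂ → ℤ}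
    (hd : ∀ j, ∃ z : ℤ, ∑ η ∈ nthRootsFinset n (1 : ℂ), (d η : ℂ) * η ^ j = z)
    {p : ℕ} (hp : p.Prime) (k : ℕ) :
    ∑ ω ∈ nthRootsFinset n (1 : ℂ), (d ω : ℂ) * (ω ^ p ^ k - ω ^ p ^ (k - 1)) ∈
      AddSubgroup.zmultiples ((p : ℂ) ^ k) := by
  classical
  rw [IsPrimitiveRoot.nthRoots_one_eq_biUnion_primitiveRoots,
    sum_biUnion fun _ _ _ _ ↦ IsPrimitiveRoot.disjoint (R := ℂ)]
  refine AddSubgroup.sum_mem _ fun r hr ↦ ?_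
  have hζ := Complex.isPrimitiveRoot_exp r (Nat.pos_of_mem_divisors hr).ne'
  rw [sum_congr rfl fun ω hω ↦ by rw [eq_of_isPrimitiveRoot_of_sum_pow_eq_intCast hn hd
    (Nat.dvd_of_mem_divisors hr) (isPrimitiveRoot_of_mem_primitiveRoots hω) hζ], ← mul_sum,
    ← zsmul_eq_mul]
  exact AddSubgroup.zsmul_mem _ (sum_primitiveRoots_pow_prime_pow_sub_mem hp k r) _

theorem stmt_4_general (G : Type*) [Group G] [Finite G]
    (V : Type*) [AddCommGroup V] [Module ℂ V] [FiniteDimensional ℂ V]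
    (ρ : Representation ℂ G V)
    (hint : ∀ g : G, ∃ z : ℤ, LinearMap.trace ℂ V (ρ g) = (z : ℂ))
    (g : G) (p : ℕ) (hp : p.Prime) (k : ℕ) :
    ∃ c : ℤ, LinearMap.trace ℂ V (ρ (g ^ p ^ k)) - LinearMap.trace ℂ V (ρ (g ^ p ^ (k - 1)))
      = (p : ℂ) ^ k * (c : ℂ) := by
  have hρ : ρ g ^ orderOf g = 1 := by rw [← map_pow, pow_orderOf_eq_one, map_one]
  let d (μ : ℂ) : ℤ := finrank ℂ (End.eigenspace (ρ g) μ)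
  have htrace (j : ℕ) : LinearMap.trace ℂ V (ρ (g ^ j)) =
      ∑ μ ∈ nthRootsFinset (orderOf g) (1 : ℂ), (d μ : ℂ) * μ ^ j := by
    simp [d, End.trace_pow_eq_sum_nthRootsFinset (orderOf_pos g) hρ]
  obtain ⟨c, hc⟩ := AddSubgroup.mem_zmultiples_iff.mp <|
    sum_mul_pow_prime_pow_sub_mem (orderOf_pos g)
      (fun j ↦ by simpa only [htrace] using hint (g ^ j)) hp k
  refine ⟨c, ?_⟩
  rw [htrace, htrace, ← sum_sub_distrib, mul_comm, ← zsmul_eq_mul, hc]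
  simp only [mul_sub]

theorem stmt_4 (G : Type*) [Group G] [Finite G]
    (V : Type*) [AddCommGroup V] [Module ℂ V] [FiniteDimensional ℂ V]
    (ρ : Representation ℂ G V)
    (hint : ∀ g : G, ∃ z : ℤ, LinearMap.trace ℂ V (ρ g) = (z : ℂ))
    (g : G) (p : ℕ) (hp : p.Prime) (k : ℕ) (hk : 1 ≤ k) :
    ∃ c : ℤ, LinearMap.trace ℂ V (ρ (g ^ p ^ k)) - LinearMap.trace ℂ V (ρ (g ^ p ^ (k - 1)))
      = (p : ℂ) ^ k * (c : ℂ) :=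
  stmt_4_general G V ρ hint g p hp k
end

section
/- Let x : ℕ → ℚ be a sequence (indexed from 1). For each n ≥ 1 define a_n ∈ ℚ by (−1)^n a_n = the coefficient of t^n in the finite product ∏_{i=1}^{n} (1 − x_i t^i). Then every a_n is an integer if and only if every x_n is an integer. -/
open Polynomial Finset

/-! Since `0 ∉ [1, n]` the product has constant term `1`, so adding the factor `1 - xₙ tⁿ` changes
its `tⁿ`-coefficient by exactly `-xₙ`. Hence `(-1)ⁿ aₙ = cₙ - xₙ`, where `cₙ` is the `tⁿ`-coefficient
of `∏_{i<n} (1 - xᵢ tⁱ)`, which lies in any subring containing `x₁, …, xₙ₋₁`. Strong induction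
on `n` then shows that the `aₙ` all lie in a subring iff the `xₙ` do. -/

section ProductCoefficients

variable {R : Type*} [CommRing R]

lemma coeff_prod_one_sub_mem {T : Subring R} {x : ℕ → R} {s : Finset ℕ}
    (hx : ∀ i ∈ s, x i ∈ T) (k : ℕ) : (∏ i ∈ s, (1 - C (x i) * X ^ i)).coeff k ∈ T := by
  have hlifts : ∏ i ∈ s, (1 - C (x i) * X ^ i) ∈ lifts T.subtype :=
    prod_mem fun i hi => (mem_lifts _).2 ⟨1 - C ⟨x i, hx i hi⟩ * X ^ i, by simp⟩
  obtain ⟨y, hy⟩ := (lifts_iff_coeff_lifts _).1 hlifts k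
  exact hy ▸ y.2

lemma coeff_zero_prod_one_sub {x : ℕ → R} {s : Finset ℕ} (hs : 0 ∉ s) :
    (∏ i ∈ s, (1 - C (x i) * X ^ i)).coeff 0 = 1 := by
  rw [coeff_zero_eq_eval_zero, eval_prod]
  refine prod_eq_one fun i hi => ?_
  simp [zero_pow (ne_of_mem_of_not_mem hi hs)]

lemma coeff_prod_Icc_one_sub (x : ℕ → R) {n : ℕ} (hn : 1 ≤ n) :
    (∏ i ∈ Icc 1 n, (1 - C (x i) * X ^ i)).coeff n =
      (∏ i ∈ Ico 1 n, (1 - C (x i) * X ^ i)).coeff n - x n := by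
  rw [← Ico_insert_right hn, prod_insert right_notMem_Ico, sub_mul, one_mul, coeff_sub,
    mul_assoc, coeff_C_mul, coeff_X_pow_mul', if_pos le_rfl, Nat.sub_self,
    coeff_zero_prod_one_sub (by simp), mul_one]

theorem coeff_prod_Icc_one_sub_mem_iff (T : Subring R) (x : ℕ → R) :
    (∀ n, 1 ≤ n → (∏ i ∈ Icc 1 n, (1 - C (x i) * X ^ i)).coeff n ∈ T) ↔
      ∀ n, 1 ≤ n → x n ∈ T := by
  constructor
  · intro hcoeff n hn
    induction n using Nat.strong_induction_on with
    | _ n ih =>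
      have hprev : (∏ i ∈ Ico 1 n, (1 - C (x i) * X ^ i)).coeff n ∈ T :=
        coeff_prod_one_sub_mem (fun i hi => ih i (mem_Ico.1 hi).2 (mem_Ico.1 hi).1) n
      have hsplit := coeff_prod_Icc_one_sub x hn
      rw [eq_sub_iff_add_eq', ← eq_sub_iff_add_eq] at hsplit
      exact hsplit ▸ sub_mem hprev (hcoeff n hn)
  · exact fun hx n _ => coeff_prod_one_sub_mem (fun i hi => hx i (mem_Icc.1 hi).1) n

end ProductCoefficients

lemma Subring.neg_one_pow_mul_mem_iff {R : Type*} [Ring R] (T : Subring R) (n : ℕ) (r : R) :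
    (-1) ^ n * r ∈ T ↔ r ∈ T := by
  have hsign : (-1 : R) ^ n ∈ T := pow_mem (neg_mem (one_mem T)) n
  refine ⟨fun h => ?_, mul_mem hsign⟩
  have hr : r = (-1) ^ n * ((-1) ^ n * r) := by
    rw [← mul_assoc, ← pow_add, ← two_mul, pow_mul, neg_one_sq, one_pow, one_mul]
  exact hr ▸ mul_mem hsign h

lemma mem_range_intCast_iff (q : ℚ) : q ∈ (Int.castRingHom ℚ).range ↔ ∃ z : ℤ, q = z := by
  simp [eq_comm]

open Polynomial in
theorem stmt_11 (x : ℕ → ℚ) (a : ℕ → ℚ)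
    (ha : ∀ n : ℕ, 1 ≤ n →
      (∏ i ∈ Finset.Icc 1 n, (1 - C (x i) * X ^ i)).coeff n = (-1) ^ n * a n) :
    (∀ n : ℕ, 1 ≤ n → ∃ z : ℤ, a n = (z : ℚ)) ↔ (∀ n : ℕ, 1 ≤ n → ∃ z : ℤ, x n = (z : ℚ)) := by
  simp only [← mem_range_intCast_iff]
  refine (forall₂_congr fun n hn => ?_).trans <|
    coeff_prod_Icc_one_sub_mem_iff (Int.castRingHom ℚ).range x
  rw [ha n hn, Subring.neg_one_pow_mul_mem_iff]
end

section
/- Let x : ℕ → ℤ (indexed from 1), and for n ≥ 1 set b_n = ∑_{d ∣ n} d · x_d^(n/d). For each N ≥ 1, let P_N = ∏_{i=1}^{N} (1 − x_i t^i) ∈ ℤ[t]. Then for every n with 1 ≤ n ≤ N, the coefficient of t^n in −t · P_N′ equals the coefficient of t^n in P_N · (∑_{m=1}^{N} b_m t^m), where P_N′ denotes the formal derivative of P_N. -/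
/-!
Logarithmic differentiation: `-t (1 - a t^i)' / (1 - a t^i) = ∑_{k ≥ 1} i a^k t^{ik}`, and
logarithmic derivatives of products add up. Modulo `t^(N+1)` this is an identity between
polynomials, `X f' + f g ≡ 0`, which is stable under products, and collecting the terms
`i x_i^k t^{ik}` by their degree `n = ik` gives `b_n`.
-/

open Polynomial Finset

theorem one_sub_mul_sum_Icc_pow {R : Type*} [CommRing R] (y : R) (N : ℕ) :
    (1 - y) * ∑ k ∈ Icc 1 N, y ^ k = y - y ^ (N + 1) := by
  induction N with
  | zero => simp
  | succ N ih => rw [sum_Icc_succ_top (by omega), mul_add, ih]; ring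

theorem Nat.filter_Icc_product_Icc_mul_eq_divisorsAntidiagonal {n N : ℕ} (hnN : n ≤ N) :
    {p ∈ Icc 1 N ×ˢ Icc 1 N | p.1 * p.2 = n} = n.divisorsAntidiagonal := by
  ext ⟨i, k⟩
  simp only [mem_filter, mem_product, mem_Icc, Nat.mem_divisorsAntidiagonal]
  constructor
  · rintro ⟨⟨⟨hi, -⟩, hk, -⟩, rfl⟩
    exact ⟨rfl, by positivity⟩
  · rintro ⟨rfl, hn⟩
    have hi : 0 < i := Nat.pos_of_mul_pos_right (Nat.pos_of_ne_zero hn)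
    have hk : 0 < k := Nat.pos_of_mul_pos_left (Nat.pos_of_ne_zero hn)
    exact ⟨⟨⟨hi, (Nat.le_mul_of_pos_right i hk).trans hnN⟩,
      hk, (Nat.le_mul_of_pos_left k hi).trans hnN⟩, rfl⟩

namespace Polynomial

theorem dvd_mul_derivative_prod_add_prod_mul_sum {R ι : Type*} [CommRing R]
    {q r : R[X]} (s : Finset ι) (f g : ι → R[X])
    (h : ∀ i ∈ s, q ∣ r * derivative (f i) + f i * g i) :
    q ∣ r * derivative (∏ i ∈ s, f i) + (∏ i ∈ s, f i) * ∑ i ∈ s, g i := by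
  classical
  induction s using Finset.induction_on with
  | empty => simp
  | insert j s hj ih =>
    have hj' := h j (mem_insert_self j s)
    have hs := ih fun i hi ↦ h i (mem_insert_of_mem hi)
    rw [prod_insert hj, sum_insert hj, derivative_mul]
    convert dvd_add (dvd_mul_of_dvd_left hj' (∏ i ∈ s, f i)) (dvd_mul_of_dvd_right hs (f j))
      using 1
    ring

theorem X_mul_derivative_C_mul_X_pow {R : Type*} [CommSemiring R] (a : R) (i : ℕ) :
    X * derivative (C a * X ^ i) = C (i : R) * (C a * X ^ i) := by
  cases i with
  | zero => simp
  | succ i => rw [derivative_C_mul_X_pow, Nat.add_sub_cancel, C_mul]; ring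

theorem X_pow_succ_dvd_X_mul_derivative_one_sub_C_mul_X_pow_add {R : Type*} [CommRing R]
    (a : R) {i : ℕ} (hi : 0 < i) (N : ℕ) :
    X ^ (N + 1) ∣ X * derivative (1 - C a * X ^ i) +
      (1 - C a * X ^ i) * ∑ k ∈ Icc 1 N, C (i * a ^ k) * X ^ (i * k) := by
  set y : R[X] := C a * X ^ i
  have hsum : ∑ k ∈ Icc 1 N, C (i * a ^ k) * X ^ (i * k) =
      C (i : R) * ∑ k ∈ Icc 1 N, y ^ k := by
    simp only [mul_sum, y, mul_pow, ← C_pow, pow_mul, C_mul, mul_assoc]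
  have hy : X * derivative y = C (i : R) * y := X_mul_derivative_C_mul_X_pow a i
  have key : X * derivative (1 - y) + (1 - y) * (C (i : R) * ∑ k ∈ Icc 1 N, y ^ k) =
      -C (i : R) * y ^ (N + 1) := by
    rw [derivative_sub, derivative_one]
    linear_combination -hy + C (i : R) * one_sub_mul_sum_Icc_pow y N
  have hX : X ∣ y := dvd_mul_of_dvd_right (dvd_pow_self X hi.ne') _
  rw [hsum, key]
  exact dvd_mul_of_dvd_right (pow_dvd_pow_of_dvd hX _) _

theorem coeff_sum_Icc_sum_Icc_C_mul_X_pow {R : Type*} [CommSemiring R] (x : ℕ → R)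
    {n N : ℕ} (hnN : n ≤ N) :
    (∑ i ∈ Icc 1 N, ∑ k ∈ Icc 1 N, C (i * x i ^ k) * X ^ (i * k)).coeff n =
      ∑ p ∈ n.divisorsAntidiagonal, p.1 * x p.1 ^ p.2 := by
  simp only [finsetSum_coeff, coeff_C_mul_X_pow]
  rw [← Nat.filter_Icc_product_Icc_mul_eq_divisorsAntidiagonal hnN, sum_filter, sum_product]
  simp only [eq_comm]

end Polynomial

open Polynomial in
theorem stmt_12_general (x : ℕ → ℤ) (b : ℕ → ℤ)
    (hb : ∀ n : ℕ, 1 ≤ n → b n = ∑ d ∈ n.divisors, (d : ℤ) * x d ^ (n / d))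
    (N : ℕ) :
    ∀ n : ℕ, 1 ≤ n → n ≤ N →
      (-(X * derivative (∏ i ∈ Finset.Icc 1 N, (1 - C (x i) * X ^ i)))).coeff n =
      ((∏ i ∈ Finset.Icc 1 N, (1 - C (x i) * X ^ i)) *
        ∑ m ∈ Finset.Icc 1 N, C (b m) * X ^ m).coeff n := by
  intro n _ hnN
  set P := ∏ i ∈ Icc 1 N, (1 - C (x i) * X ^ i)
  set B := ∑ m ∈ Icc 1 N, C (b m) * X ^ m
  set G := ∑ i ∈ Icc 1 N, ∑ k ∈ Icc 1 N, C (i * x i ^ k) * X ^ (i * k)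
  have hP : X ^ (N + 1) ∣ X * derivative P + P * G :=
    dvd_mul_derivative_prod_add_prod_mul_sum _ _ _ fun i hi ↦
      X_pow_succ_dvd_X_mul_derivative_one_sub_C_mul_X_pow_add (x i) (mem_Icc.mp hi).1 N
  have hG : X ^ (N + 1) ∣ G - B := by
    refine X_pow_dvd_iff.mpr fun d hd ↦ ?_
    rw [coeff_sub, sub_eq_zero, coeff_sum_Icc_sum_Icc_C_mul_X_pow x (by omega)]
    simp only [B, finsetSum_coeff, coeff_C_mul_X_pow, sum_ite_eq, mem_Icc]
    rcases Nat.eq_zero_or_pos d with rfl | hd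
    · simp
    · rw [if_pos ⟨hd, by omega⟩, hb d hd,
        Nat.sum_divisorsAntidiagonal fun i k ↦ (i : ℤ) * x i ^ k]
  have hPB : X ^ (N + 1) ∣ X * derivative P + P * B := by
    convert dvd_sub hP (dvd_mul_of_dvd_right hG P) using 1
    ring
  have hcoeff := X_pow_dvd_iff.mp hPB n (by omega)
  rw [coeff_add] at hcoeff
  rw [coeff_neg]
  linear_combination -hcoeff

open Polynomial in
theorem stmt_12 (x : ℕ → ℤ) (b : ℕ → ℤ)
    (hb : ∀ n : ℕ, 1 ≤ n → b n = ∑ d ∈ n.divisors, (d : ℤ) * x d ^ (n / d))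
    (N : ℕ) (hN : 1 ≤ N) :
    ∀ n : ℕ, 1 ≤ n → n ≤ N →
      (-(X * derivative (∏ i ∈ Finset.Icc 1 N, (1 - C (x i) * X ^ i)))).coeff n =
      ((∏ i ∈ Finset.Icc 1 N, (1 - C (x i) * X ^ i)) *
        ∑ m ∈ Finset.Icc 1 N, C (b m) * X ^ m).coeff n :=
  stmt_12_general x b hb N
end

section
/- Let x : ℕ → ℤ (indexed from 1) and set b_n = ∑_{d ∣ n} d · x_d^(n/d) for n ≥ 1. Let p be a prime and n = m·p^k with k ≥ 1 and p ∤ m. Then p^k divides b_n − b_(n/p) − n·x_n. -/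
/-!
Split the divisors of `n = p * N` into those of `N` and the rest. A divisor `d` of `n` that does
not divide `N` carries the full power `p ^ v_p(n)`. For `d ∣ N`, the difference of the two terms
is `d * (a ^ (p * e) - a ^ e)` with `e = N / d`; writing `e = p ^ s * t` with `p ∤ t`, Fermat's
little theorem lifted along `p`-th powers makes `a ^ (p * e) - a ^ e` divisible by `p ^ (s + 1)`,
and `p ^ v_p(d)` divides `d`, which adds up to `v_p(n)`.
-/

/-- `ghostSum x n` is `b_n`: the `n`-th ghost component of the big Witt vector `x`. -/
def ghostSum (x : ℕ → ℤ) (n : ℕ) : ℤ :=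
  ∑ d ∈ n.divisors, (d : ℤ) * x d ^ (n / d)

theorem Int.pow_factorization_succ_dvd_pow_mul_sub_pow {p : ℕ} (hp : p.Prime) (a : ℤ) (e : ℕ) :
    (p : ℤ) ^ (e.factorization p + 1) ∣ a ^ (p * e) - a ^ e := by
  set s := e.factorization p
  set t := e / p ^ s
  have he : e = p ^ s * t := (Nat.ordProj_mul_ordCompl_eq_self e p).symm
  have hpe : a ^ (p * e) = ((a ^ t) ^ p) ^ p ^ s := by rw [← pow_mul, ← pow_mul, he]; ring
  have hse : a ^ e = (a ^ t) ^ p ^ s := by rw [← pow_mul, he, mul_comm]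
  rw [hpe, hse]
  exact dvd_sub_pow_of_dvd_sub (Int.prime_dvd_pow_self_sub hp (a ^ t)) s

theorem Nat.pow_factorization_dvd_of_dvd_of_not_dvd_div {p d n : ℕ} (hd : d ∣ n)
    (hdp : ¬ d ∣ n / p) : p ^ n.factorization p ∣ d := by
  refine (Nat.pow_dvd_pow p ?_).trans (Nat.ordProj_dvd d p)
  by_contra! hlt
  have hp_dvd : p ∣ n / d := Nat.dvd_of_factorization_pos <| by
    rw [Nat.factorization_div hd, Finsupp.tsub_apply]
    omega
  exact hdp <| Nat.dvd_div_of_mul_dvd <| by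
    rw [mul_comm]
    exact Nat.mul_dvd_of_dvd_div hd hp_dvd

theorem pow_factorization_dvd_ghostSum_sub_ghostSum_div {p n : ℕ} (hp : p.Prime) (x : ℕ → ℤ)
    (hn : n ≠ 0) (hpn : p ∣ n) :
    (p : ℤ) ^ n.factorization p ∣ ghostSum x n - ghostSum x (n / p) := by
  obtain ⟨N, rfl⟩ := hpn
  have hN : N ≠ 0 := right_ne_zero_of_mul hn
  have hdivp : p * N / p = N := Nat.mul_div_cancel_left N hp.pos
  have hsplit : ghostSum x (p * N) - ghostSum x N =
      ∑ d ∈ (p * N).divisors \ N.divisors, (d : ℤ) * x d ^ (p * N / d) +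
        ∑ d ∈ N.divisors, (d : ℤ) * (x d ^ (p * (N / d)) - x d ^ (N / d)) := by
    rw [ghostSum, ghostSum, ← Finset.sum_sdiff (Nat.divisors_subset_of_dvd hn (dvd_mul_left N p)),
      add_sub_assoc, ← Finset.sum_sub_distrib]
    congr 1
    refine Finset.sum_congr rfl fun d hd => ?_
    rw [Nat.mul_div_assoc p (Nat.dvd_of_mem_divisors hd)]
    ring
  rw [hdivp, hsplit]
  refine dvd_add (Finset.dvd_sum fun d hd => ?_) (Finset.dvd_sum fun d hd => ?_)
  · rw [Finset.mem_sdiff, Nat.mem_divisors, Nat.mem_divisors] at hd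
    have hpow := Nat.pow_factorization_dvd_of_dvd_of_not_dvd_div hd.1.1
      (by rw [hdivp]; exact fun h => hd.2 ⟨h, hN⟩)
    exact (Int.natCast_dvd_natCast.mpr hpow).mul_right _
  · have hdN := Nat.dvd_of_mem_divisors hd
    have hle : d.factorization p ≤ N.factorization p :=
      (Nat.factorization_le_iff_dvd (ne_zero_of_dvd_ne_zero hN hdN) hN).mpr hdN p
    have hv : (p * N).factorization p = d.factorization p + ((N / d).factorization p + 1) := by
      rw [Nat.factorization_mul hp.ne_zero hN, Nat.factorization_div hdN]
      simp only [Finsupp.add_apply, Finsupp.tsub_apply, hp.factorization_self]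
      omega
    rw [hv, pow_add]
    exact mul_dvd_mul (Int.natCast_dvd_natCast.mpr (Nat.ordProj_dvd d p))
      (Int.pow_factorization_succ_dvd_pow_mul_sub_pow hp _ _)

theorem stmt_13 (x : ℕ → ℤ) (b : ℕ → ℤ)
    (hb : ∀ n : ℕ, 1 ≤ n → b n = ∑ d ∈ n.divisors, (d : ℤ) * x d ^ (n / d))
    (p : ℕ) (hp : p.Prime) (m k n : ℕ) (hk : 1 ≤ k) (hm : ¬ p ∣ m)
    (hn : n = m * p ^ k) :
    (p : ℤ) ^ k ∣ b n - b (n / p) - (n : ℤ) * x n := by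
  have hm0 : m ≠ 0 := by rintro rfl; exact hm (dvd_zero p)
  have hn0 : n ≠ 0 := by simp [hn, hm0, hp.ne_zero]
  have hpn : p ∣ n := hn ▸ dvd_mul_of_dvd_right (dvd_pow_self p (by omega)) m
  have hfn : n.factorization p = k := by
    rw [hn, Nat.factorization_mul hm0 (pow_ne_zero k hp.ne_zero), hp.factorization_pow]
    simp [Nat.factorization_eq_zero_of_not_dvd hm]
  have hnp : 1 ≤ n / p := Nat.div_pos (Nat.le_of_dvd (Nat.pos_of_ne_zero hn0) hpn) hp.pos
  rw [hb n (Nat.one_le_iff_ne_zero.mpr hn0), hb (n / p) hnp, ← hfn]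
  exact dvd_sub (pow_factorization_dvd_ghostSum_sub_ghostSum_div hp x hn0 hpn)
    ((Int.natCast_dvd_natCast.mpr (Nat.ordProj_dvd n p)).mul_right _)
end

section
/- Let b : ℕ → ℤ (indexed from 1). There exists a sequence of integers x : ℕ → ℤ such that b_n = ∑_{d ∣ n} d · x_d^(n/d) for all n ≥ 1 if and only if for every n ≥ 1 and every prime p dividing n, b_n ≡ b_(n/p) (mod p^k), where k is the exponent of p in n. -/
/-!
The map `x ↦ (∑_{d ∣ n} d x_d^{n/d})_n` is triangular: its `n`-th component is `n x_n` plus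
terms in the `x_d` for proper divisors `d` of `n`. Ghost components of every `x` satisfy the
congruences: a divisor of `n` not dividing `n / p` is a multiple of `p ^ k`, and for `e ∣ n / p`
the terms `e x_e^{n/e}` and `e x_e^{n/(pe)}` differ by a multiple of `p ^ k`, by Fermat's little
theorem lifted to prime powers. Conversely `x` is solved for recursively, which needs `n` to
divide `b_n` minus the proper-divisor terms; modulo each `p ^ k ∥ n` this difference is
`b_n - b_{n/p}`, by the ghost congruence for the part of `x` already built.
-/

open Finset

namespace Int

theorem pow_succ_dvd_pow_prime_mul_sub_pow {p j a : ℕ} (hp : p.Prime) (x : ℤ) (ha : p ^ j ∣ a) :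
    (p : ℤ) ^ (j + 1) ∣ x ^ (p * a) - x ^ a := by
  obtain ⟨m, rfl⟩ := ha
  have hpow : x ^ (p * (p ^ j * m)) = ((x ^ m) ^ p) ^ p ^ j := by
    rw [← pow_mul, ← pow_mul]; ring_nf
  rw [hpow, mul_comm, pow_mul]
  exact dvd_sub_pow_of_dvd_sub (Int.prime_dvd_pow_self_sub hp (x ^ m)) j

theorem pow_dvd_mul_pow_prime_mul_sub_pow {p k e a : ℕ} (hp : p.Prime) (hk : p ^ k ∣ p * (e * a))
    (x : ℤ) : (p : ℤ) ^ k ∣ e * (x ^ (p * a) - x ^ a) := by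
  rcases eq_or_ne e 0 with rfl | he
  · simp
  rcases eq_or_ne a 0 with rfl | ha
  · simp
  have hk' : k ≤ e.factorization p + (a.factorization p + 1) := by
    rw [hp.pow_dvd_iff_le_factorization (mul_ne_zero hp.ne_zero (mul_ne_zero he ha)),
      Nat.factorization_mul hp.ne_zero (mul_ne_zero he ha), Nat.factorization_mul he ha] at hk
    simp only [Finsupp.add_apply, hp.factorization_self] at hk
    omega
  have he' : (p : ℤ) ^ e.factorization p ∣ e := by exact_mod_cast Nat.ordProj_dvd e p
  refine (pow_dvd_pow _ hk').trans ?_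
  rw [pow_add]
  exact mul_dvd_mul he' (pow_succ_dvd_pow_prime_mul_sub_pow hp x (Nat.ordProj_dvd a p))

theorem natCast_dvd_of_forall_prime_pow_factorization_dvd {n : ℕ} {z : ℤ} (hn : n ≠ 0)
    (h : ∀ p : ℕ, p.Prime → p ∣ n → (p : ℤ) ^ n.factorization p ∣ z) : (n : ℤ) ∣ z := by
  rw [Int.natCast_dvd, Nat.dvd_iff_prime_pow_dvd_dvd]
  intro p k hp hpk
  rcases eq_or_ne k 0 with rfl | hk
  · simp
  have hpn : p ∣ n := (dvd_pow_self p hk).trans hpk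
  have hz : p ^ n.factorization p ∣ z.natAbs := by
    rw [← Int.natCast_dvd]; exact_mod_cast h p hp hpn
  exact (pow_dvd_pow p ((hp.pow_dvd_iff_le_factorization hn).mp hpk)).trans hz

end Int

theorem Nat.dvd_div_of_factorization_lt {n d p : ℕ} (hp : p.Prime) (hd : d ∣ n)
    (hlt : d.factorization p < n.factorization p) : d ∣ n / p := by
  have hpn : p ∣ n := Nat.dvd_of_factorization_pos (by omega)
  have hn : n ≠ 0 := by rintro rfl; simp at hlt
  have hn' : n / p ≠ 0 := by
    rw [Nat.div_ne_zero_iff_of_dvd hpn]; exact ⟨hn, hp.ne_zero⟩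
  rw [← Nat.factorization_prime_le_iff_dvd (ne_zero_of_dvd_ne_zero hn hd) hn']
  intro q hq
  have hdq := (Nat.factorization_prime_le_iff_dvd (ne_zero_of_dvd_ne_zero hn hd) hn).mpr hd q hq
  rw [Nat.factorization_div hpn, hp.factorization, Finsupp.tsub_apply, Finsupp.single_apply]
  split_ifs with hpq
  · subst hpq; omega
  · omega

def ghostComponent (x : ℕ → ℤ) (n : ℕ) : ℤ :=
  ∑ d ∈ n.divisors, (d : ℤ) * x d ^ (n / d)

theorem ghostComponent_eq_sum_properDivisors_add (x : ℕ → ℤ) (n : ℕ) :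
    ghostComponent x n = ∑ d ∈ n.properDivisors, (d : ℤ) * x d ^ (n / d) + n * x n := by
  rcases eq_or_ne n 0 with rfl | hn
  · simp [ghostComponent]
  rw [ghostComponent, ← Nat.cons_self_properDivisors hn, sum_cons, Nat.div_self hn.bot_lt,
    pow_one, add_comm]

theorem ghostComponent_modEq_ghostComponent_div (x : ℕ → ℤ) {p : ℕ} (hp : p.Prime) (n : ℕ) :
    ghostComponent x n ≡ ghostComponent x (n / p) [ZMOD (p : ℤ) ^ n.factorization p] := by
  by_cases hpn : p ∣ n
  swap
  · simp [Nat.factorization_eq_zero_of_not_dvd hpn, Int.modEq_one]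
  rcases eq_or_ne n 0 with rfl | hn
  · rw [Nat.zero_div]
  have hsub : (n / p).divisors ⊆ n.divisors :=
    Nat.divisors_subset_of_dvd hn (Nat.div_dvd_of_dvd hpn)
  have hsplit : ghostComponent x n - ghostComponent x (n / p) =
      ∑ d ∈ n.divisors \ (n / p).divisors, (d : ℤ) * x d ^ (n / d) +
        ∑ e ∈ (n / p).divisors, (e : ℤ) * (x e ^ (n / e) - x e ^ (n / p / e)) := by
    rw [ghostComponent, ghostComponent, ← sum_sdiff hsub]
    simp only [mul_sub, sum_sub_distrib]
    ring
  refine (Int.modEq_iff_dvd.mpr ?_).symm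
  rw [hsplit]
  refine dvd_add (dvd_sum fun d hd => ?_) (dvd_sum fun e he => ?_)
  · obtain ⟨hdn, hdnp⟩ := mem_sdiff.mp hd
    have hd0 : d ≠ 0 := ne_zero_of_dvd_ne_zero hn (Nat.dvd_of_mem_divisors hdn)
    have hkd : p ^ n.factorization p ∣ d := by
      rw [hp.pow_dvd_iff_le_factorization hd0]
      by_contra! hlt
      exact hdnp (Nat.mem_divisors.mpr
        ⟨Nat.dvd_div_of_factorization_lt hp (Nat.dvd_of_mem_divisors hdn) hlt,
          (Nat.div_ne_zero_iff_of_dvd hpn).mpr ⟨hn, hp.ne_zero⟩⟩)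
    exact dvd_mul_of_dvd_left (by exact_mod_cast hkd) _
  · obtain ⟨a, ha⟩ := Nat.dvd_of_mem_divisors he
    have he0 : e ≠ 0 := (Nat.pos_of_mem_divisors he).ne'
    have hn_eq : n = p * (e * a) := by rw [← ha, Nat.mul_div_cancel' hpn]
    have hne : n / e = p * a := by
      rw [hn_eq, mul_left_comm, Nat.mul_div_cancel_left _ he0.bot_lt]
    rw [hne, ha, Nat.mul_div_cancel_left _ he0.bot_lt]
    exact Int.pow_dvd_mul_pow_prime_mul_sub_pow hp (hn_eq ▸ Nat.ordProj_dvd n p) (x e)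

-- `/` rounds; the division is exact only under the congruences of `ghostComponent_wittOfGhost`.
noncomputable def wittOfGhost (b : ℕ → ℤ) (n : ℕ) : ℤ :=
  (b n - ∑ d ∈ n.properDivisors.attach, (d : ℤ) * wittOfGhost b d ^ (n / d)) / n
termination_by n
decreasing_by exact (Nat.mem_properDivisors.mp d.2).2

theorem wittOfGhost_eq (b : ℕ → ℤ) (n : ℕ) :
    wittOfGhost b n = (b n - ∑ d ∈ n.properDivisors, (d : ℤ) * wittOfGhost b d ^ (n / d)) / n := by
  rw [wittOfGhost, sum_attach n.properDivisors fun d => (d : ℤ) * wittOfGhost b d ^ (n / d)]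

theorem ghostComponent_wittOfGhost {b : ℕ → ℤ}
    (hb : ∀ n : ℕ, 1 ≤ n → ∀ p : ℕ, p.Prime → p ∣ n →
      b n ≡ b (n / p) [ZMOD (p : ℤ) ^ (n.factorization p)]) {n : ℕ} (hn : 1 ≤ n) :
    ghostComponent (wittOfGhost b) n = b n := by
  induction n using Nat.strong_induction_on with
  | _ n ih =>
  set S := ∑ d ∈ n.properDivisors, (d : ℤ) * wittOfGhost b d ^ (n / d)
  have hS : (n : ℤ) ∣ b n - S := by
    refine Int.natCast_dvd_of_forall_prime_pow_factorization_dvd (by omega) fun p hp hpn => ?_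
    have hnp : 1 ≤ n / p := Nat.div_pos (Nat.le_of_dvd hn hpn) hp.pos
    have hn0 : (n : ℤ) ≡ 0 [ZMOD (p : ℤ) ^ n.factorization p] :=
      Int.modEq_zero_iff_dvd.mpr (by exact_mod_cast Nat.ordProj_dvd n p)
    refine Int.ModEq.dvd ?_
    calc S = S + 0 * wittOfGhost b n := by ring
      _ ≡ S + n * wittOfGhost b n [ZMOD (p : ℤ) ^ n.factorization p] :=
        (hn0.symm.mul_right _).add_left S
      _ = ghostComponent (wittOfGhost b) n := (ghostComponent_eq_sum_properDivisors_add _ n).symm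
      _ ≡ ghostComponent (wittOfGhost b) (n / p) [ZMOD (p : ℤ) ^ n.factorization p] :=
        ghostComponent_modEq_ghostComponent_div _ hp n
      _ = b (n / p) := ih _ (Nat.div_lt_self hn hp.one_lt) hnp
      _ ≡ b n [ZMOD (p : ℤ) ^ n.factorization p] := (hb n hn p hp hpn).symm
  rw [ghostComponent_eq_sum_properDivisors_add, wittOfGhost_eq, Int.mul_ediv_cancel' hS]
  ring

theorem stmt_14 (b : ℕ → ℤ) :
    (∃ x : ℕ → ℤ, ∀ n : ℕ, 1 ≤ n → b n = ∑ d ∈ n.divisors, (d : ℤ) * x d ^ (n / d)) ↔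
    (∀ n : ℕ, 1 ≤ n → ∀ p : ℕ, p.Prime → p ∣ n →
      b n ≡ b (n / p) [ZMOD (p : ℤ) ^ (n.factorization p)]) := by
  refine ⟨fun ⟨x, hx⟩ n hn p hp hpn => ?_, fun hb => ?_⟩
  · rw [hx n hn, hx (n / p) (Nat.div_pos (Nat.le_of_dvd hn hpn) hp.pos)]
    exact ghostComponent_modEq_ghostComponent_div x hp n
  · exact ⟨wittOfGhost b, fun n hn => (ghostComponent_wittOfGhost hb hn).symm⟩
end
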